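/- arXiv:1307.8083 — 2 statements merged into one kernel-verified Lean document; each statement's English description precedes it below -/
import Mathlib

section
/- Let X_1, ..., X_n be i.i.d. with X_i = Δ + E_i, E_i i.i.d. exponential with rate μ, Δ ≥ 0. Define the system usage of serving a request with an (n,k) code (all tasks starting simultaneously, remaining tasks cancelled when the k-th completes) as U = Σ_{i=1}^n min(X_i, X_(k)). Then E[U] = nΔ + k/μ. -/
open MeasureTheory ProbabilityTheory

/-- The `k`-th smallest among the values `f 0, …, f (n-1)`. -/
noncomputable def kthOrderStat {n : ℕ} (k : ℕ) (f : Fin n → ℝ) : ℝ :=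
  sInf {x : ℝ | k ≤ (Finset.univ.filter (fun i => f i ≤ x)).card}

/-!
Shift by `Δ`, so that the task times `E i` are i.i.d. `Exp(μ)`. Task `i` is busy during
`(0, min (E i) E_(k))`, and for `t < E i` the `k`-th completion has not happened by time `t` iff
fewer than `k` of the other tasks are done by then, an event independent of `E i`. As the
survival function of `Exp(μ)` is `μ⁻¹` times its density, the expected busy time of task `i` is
`μ⁻¹ · P(fewer than k other tasks finish no later than E i)`, that is `μ⁻¹ · P(E i has rank ≤ k)`.
Ties have probability zero, so summing over `i` counts exactly `k` tasks.
-/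

open Finset
open scoped ENNReal

section OrderStatistic

variable {n k : ℕ}

lemma lt_kthOrderStat_iff (hk1 : 1 ≤ k) (hkn : k ≤ n) (a : Fin n → ℝ) (t : ℝ) :
    t < kthOrderStat k a ↔ #{i | a i ≤ t} < k := by
  have hne : (univ : Finset (Fin n)).Nonempty := univ_nonempty_iff.2 ⟨⟨0, by omega⟩⟩
  set S := {x : ℝ | k ≤ #{i | a i ≤ x}}
  have hS : S.Nonempty := by
    refine ⟨univ.sup' hne a, ?_⟩
    rwa [Set.mem_ofPred_eq, filter_true_of_mem fun i _ => le_sup' a (mem_univ i), card_univ,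
      Fintype.card_fin]
  have hS_bdd : BddBelow S := by
    refine ⟨univ.inf' hne a, fun x hx => ?_⟩
    obtain ⟨i, hi⟩ := card_pos.1 (hk1.trans hx)
    exact (inf'_le a (mem_univ i)).trans (mem_filter.1 hi).2
  refine ⟨fun ht => not_le.1 fun hS_t => ht.not_ge (csInf_le hS_bdd hS_t), fun ht => ?_⟩
  have hT : ({i | t < a i} : Finset (Fin n)).Nonempty := by
    by_contra hT
    rw [not_nonempty_iff_eq_empty, filter_eq_empty_iff] at hT
    rw [filter_true_of_mem fun i _ => not_lt.1 (hT (mem_univ i)), card_univ,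
      Fintype.card_fin] at ht
    omega
  -- the smallest value above `t` is a lower bound of `S` lying strictly above `t`
  refine ((lt_inf'_iff hT).2 fun i hi => (mem_filter.1 hi).2).trans_le
    (le_csInf hS fun x hx => ?_)
  by_contra! hx_lt
  have hsub : ({i | a i ≤ x} : Finset (Fin n)) ⊆ ({i | a i ≤ t} : Finset (Fin n)) := by
    intro i hi
    simp only [mem_filter, mem_univ, true_and] at hi ⊢
    by_contra! hti
    exact hx_lt.not_ge ((inf'_le a (by simpa using hti)).trans hi)
  exact (card_le_card hsub).not_gt (ht.trans_le hx)

lemma kthOrderStat_const_add (hk1 : 1 ≤ k) (hkn : k ≤ n) (c : ℝ) (a : Fin n → ℝ) :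
    kthOrderStat k (fun i => c + a i) = c + kthOrderStat k a :=
  eq_of_forall_lt_iff fun t => by
    rw [lt_kthOrderStat_iff hk1 hkn, ← sub_lt_iff_lt_add', lt_kthOrderStat_iff hk1 hkn]
    simp_rw [le_sub_iff_add_le']

lemma kthOrderStat_nonneg (hk1 : 1 ≤ k) (hkn : k ≤ n) {a : Fin n → ℝ} (ha : ∀ i, 0 ≤ a i) :
    0 ≤ kthOrderStat k a :=
  le_of_forall_lt fun t ht => (lt_kthOrderStat_iff hk1 hkn a t).2 <| by
    rw [filter_false_of_mem fun i _ => not_le.2 (ht.trans_le (ha i)), card_empty]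
    omega

end OrderStatistic

section Counting

lemma card_filter_univ_subtype {ι : Type*} (s : Finset ι) (p : ι → Prop) [DecidablePred p] :
    #{j : s | p j} = #{j ∈ s | p j} := by
  rw [univ_eq_attach, filter_attach, card_map, card_attach]

variable {ι α : Type*} [Fintype ι] [LinearOrder α]

lemma card_filter_card_filter_lt_lt {a : ι → α} (ha : Function.Injective a) {k : ℕ}
    (hk : k ≤ Fintype.card ι) : #{i | #{j | a j < a i} < k} = k := by
  set rank : ι → ℕ := fun i => #{j | a j < a i}
  have rank_lt_rank {i i' : ι} (h : a i < a i') : rank i < rank i' := by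
    refine card_lt_card ⟨fun j hj => ?_, fun hsub => ?_⟩
    · simp only [mem_filter, mem_univ, true_and] at hj ⊢
      exact hj.trans h
    · simpa using hsub (by simpa using h : i ∈ _)
  have rank_inj : Function.Injective rank := fun i i' h => ha <| by
    rcases lt_trichotomy (a i) (a i') with hlt | heq | hgt
    · exact absurd h (rank_lt_rank hlt).ne
    · exact heq
    · exact absurd h (rank_lt_rank hgt).ne'
  have image_rank : univ.image rank = range (Fintype.card ι) := by
    refine eq_of_subset_of_card_le (fun r hr => ?_) ?_
    · obtain ⟨i, -, rfl⟩ := mem_image.1 hr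
      exact mem_range.2 (card_lt_card ⟨filter_subset _ _, fun h => by simpa using h (mem_univ i)⟩)
    · rw [card_range, card_image_of_injective _ rank_inj, card_univ]
  calc #{i | rank i < k} = #((univ.image rank).filter (· < k)) := by
        rw [filter_image, card_image_of_injective _ rank_inj]
    _ = k := by
        rw [image_rank]
        refine (congrArg card ?_).trans (card_range k)
        ext r
        simp only [mem_filter, mem_range]
        omega

variable [DecidableEq ι]

lemma card_filter_compl_singleton_le_of_lt {a : ι → α} {i : ι} {t : α} (ht : t < a i) :
    #{j : ↥({i}ᶜ : Finset ι) | a j ≤ t} = #{j | a j ≤ t} := by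
  refine (card_filter_univ_subtype _ fun j => a j ≤ t).trans (congrArg card ?_)
  ext j
  simp only [mem_filter, mem_compl, mem_singleton, mem_univ, true_and, and_iff_right_iff_imp]
  rintro hj rfl
  exact hj.not_gt ht

lemma card_filter_compl_singleton_le_self {a : ι → α} (ha : Function.Injective a) (i : ι) :
    #{j : ↥({i}ᶜ : Finset ι) | a j ≤ a i} = #{j | a j < a i} := by
  refine (card_filter_univ_subtype _ fun j => a j ≤ a i).trans (congrArg card ?_)
  ext j
  simp only [mem_filter, mem_compl, mem_singleton, mem_univ, true_and, lt_iff_le_and_ne,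
    ha.ne_iff]
  tauto

end Counting

noncomputable def fewerThanAtMost {κ : Type*} [Fintype κ] (k : ℕ) (y : κ → ℝ) (t : ℝ) : ℝ≥0∞ :=
  if #{j | y j ≤ t} < k then 1 else 0

lemma sum_fewerThanAtMost_compl_singleton {ι : Type*} [Fintype ι] [DecidableEq ι] {k : ℕ}
    (hk : k ≤ Fintype.card ι) {a : ι → ℝ} (ha : Function.Injective a) :
    ∑ i, fewerThanAtMost k (fun j : ↥({i}ᶜ : Finset ι) => a j) (a i) = k := by
  simp only [fewerThanAtMost, card_filter_compl_singleton_le_self ha]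
  rw [sum_boole, card_filter_card_filter_lt_lt ha hk]

/-- `min (a i) m` is the length of `(0, a i) ∩ (0, m)`, and for `t < a i` the event `t < m`
depends only on the values `a j` with `j ≠ i`. -/
lemma ofReal_min_kthOrderStat_eq_setLIntegral {n k : ℕ} (hk1 : 1 ≤ k) (hkn : k ≤ n)
    (a : Fin n → ℝ) (i : Fin n) :
    ENNReal.ofReal (min (a i) (kthOrderStat k a)) =
      ∫⁻ t in Set.Ioo 0 (a i), fewerThanAtMost k (fun j : ↥({i}ᶜ : Finset (Fin n)) => a j) t := by
  calc ENNReal.ofReal (min (a i) (kthOrderStat k a))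
      = volume (Set.Ioo 0 (a i) ∩ Set.Iio (kthOrderStat k a)) := by
        rw [Set.Ioo_inter_Iio, Real.volume_Ioo, sub_zero]
    _ = ∫⁻ t in Set.Ioo 0 (a i), (Set.Iio (kthOrderStat k a)).indicator 1 t := by
        rw [lintegral_indicator_one measurableSet_Iio, Measure.restrict_apply measurableSet_Iio,
          Set.inter_comm]
    _ = _ := setLIntegral_congr_fun measurableSet_Ioo fun t ht => by
        simp_rw [fewerThanAtMost, card_filter_compl_singleton_le_of_lt ht.2,
          ← lt_kthOrderStat_iff hk1 hkn]
        rfl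

lemma measurable_card_filter_le {α ι : Type*} [MeasurableSpace α] [Fintype ι]
    {f : ι → α → ℝ} {g : α → ℝ} (hf : ∀ j, Measurable (f j)) (hg : Measurable g) :
    Measurable fun x => #{j | f j x ≤ g x} := by
  simp_rw [card_filter]
  exact Finset.measurable_sum _ fun j _ =>
    Measurable.ite (measurableSet_le (hf j) hg) measurable_const measurable_const

lemma measurable_kthOrderStat {Ω : Type*} [MeasurableSpace Ω] {n k : ℕ} (hk1 : 1 ≤ k)
    (hkn : k ≤ n) {X : Fin n → Ω → ℝ} (hX : ∀ i, Measurable (X i)) :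
    Measurable fun ω => kthOrderStat k fun i => X i ω :=
  measurable_of_Ioi fun t => by
    simp_rw [Set.preimage, Set.mem_Ioi, lt_kthOrderStat_iff hk1 hkn]
    exact measurable_card_filter_le hX measurable_const measurableSet_Iio

lemma measurable_fewerThanAtMost {κ : Type*} [Fintype κ] (k : ℕ) :
    Measurable (Function.uncurry fun t (y : κ → ℝ) => fewerThanAtMost k y t) :=
  Measurable.ite (measurable_card_filter_le (fun j => (measurable_pi_apply j).comp measurable_snd)
    measurable_fst measurableSet_Iio) measurable_const measurable_const

lemma measurable_setLIntegral_Ioo {β : Type*} [MeasurableSpace β] {g : ℝ → β → ℝ≥0∞}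
    (hg : Measurable (Function.uncurry g)) :
    Measurable fun p : ℝ × β => ∫⁻ t in Set.Ioo 0 p.1, g t p.2 := by
  simp_rw [← lintegral_indicator measurableSet_Ioo]
  refine Measurable.lintegral_prod_right' (f := fun q : (ℝ × β) × ℝ =>
    (Set.Ioo 0 q.1.1).indicator (g · q.1.2) q.2) ?_
  exact (hg.comp (measurable_snd.prodMk measurable_fst.snd)).indicator
    ((measurableSet_lt measurable_const measurable_snd).inter
      (measurableSet_lt measurable_snd measurable_fst.fst))

section Exponential

instance (μ : ℝ) : NullSingletonClass (expMeasure μ) :=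
  inferInstanceAs (NullSingletonClass (volume.withDensity (exponentialPDF μ)))

variable {μ : ℝ}

lemma expMeasure_Iio_zero : expMeasure μ (Set.Iio 0) = 0 := by
  rw [show expMeasure μ = volume.withDensity (exponentialPDF μ) from rfl,
    withDensity_apply _ measurableSet_Iio, lintegral_exponentialPDF_of_nonpos le_rfl]

lemma expMeasure_Ioi (hμ : 0 < μ) {t : ℝ} (ht : 0 ≤ t) :
    expMeasure μ (Set.Ioi t) = ENNReal.ofReal (Real.exp (-(μ * t))) := by
  have := isProbabilityMeasure_expMeasure hμ
  have hexp_le : Real.exp (-(μ * t)) ≤ 1 := Real.exp_le_one_iff.2 (by nlinarith)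
  rw [← Set.compl_Iic, prob_compl_eq_one_sub measurableSet_Iic, ← ofReal_cdf,
    cdf_expMeasure_eq hμ, if_pos ht, ← ENNReal.ofReal_one,
    ← ENNReal.ofReal_sub _ (sub_nonneg.2 hexp_le), sub_sub_cancel]

lemma lintegral_expMeasure_eq_setLIntegral_Ioi {h : ℝ → ℝ≥0∞} (hh : Measurable h) :
    ∫⁻ x, h x ∂expMeasure μ =
      ∫⁻ x in Set.Ioi 0, ENNReal.ofReal (μ * Real.exp (-(μ * x))) * h x := by
  have hpdf_supp : (exponentialPDF μ * h).support ⊆ Set.Ici 0 := fun x hx => by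
    by_contra hneg
    exact hx (by simp [exponentialPDF_of_neg (not_le.1 hneg)])
  rw [show expMeasure μ = volume.withDensity (exponentialPDF μ) from rfl,
    lintegral_withDensity_eq_lintegral_mul _
      (show Measurable (exponentialPDF μ) from (measurable_exponentialPDFReal μ).ennreal_ofReal) hh,
    ← setLIntegral_eq_of_support_subset hpdf_supp, setLIntegral_congr Ioi_ae_eq_Ici.symm]
  exact setLIntegral_congr_fun measurableSet_Ioi fun x hx => by
    simp [exponentialPDF_of_nonneg (le_of_lt hx)]

/-- Memorylessness in integrated form: the density of `Exp(μ)` is `μ` times its survival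
function. -/
lemma lintegral_setLIntegral_Ioo_expMeasure (hμ : 0 < μ) {h : ℝ → ℝ≥0∞} (hh : Measurable h) :
    ∫⁻ x, (∫⁻ t in Set.Ioo 0 x, h t) ∂expMeasure μ =
      ENNReal.ofReal μ⁻¹ * ∫⁻ x, h x ∂expMeasure μ := by
  have := isProbabilityMeasure_expMeasure hμ
  have inner (x : ℝ) :
      ∫⁻ t in Set.Ioo 0 x, h t = ∫⁻ t in Set.Ioi 0, (Set.Iio x).indicator h t := by
    rw [lintegral_indicator measurableSet_Iio, Measure.restrict_restrict measurableSet_Iio,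
      Set.Iio_inter_Ioi]
  have outer (t : ℝ) :
      ∫⁻ x, (Set.Iio x).indicator h t ∂expMeasure μ = expMeasure μ (Set.Ioi t) * h t := by
    rw [mul_comm, ← lintegral_indicator_const measurableSet_Ioi]
    -- both integrands are `if t < x then h t else 0`
    rfl
  rw [lintegral_congr inner, lintegral_lintegral_swap,
    lintegral_expMeasure_eq_setLIntegral_Ioi hh, ← lintegral_const_mul]
  · refine setLIntegral_congr_fun measurableSet_Ioi fun t ht => ?_
    rw [outer, expMeasure_Ioi hμ (le_of_lt ht), ← mul_assoc,
      ← ENNReal.ofReal_mul (by positivity), inv_mul_cancel_left₀ hμ.ne']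
  · fun_prop
  · exact ((hh.comp measurable_snd).indicator
      (measurableSet_lt measurable_snd measurable_fst)).aemeasurable

end Exponential

section Independence

variable {Ω : Type*} [MeasurableSpace Ω] {P : Measure Ω}

lemma ProbabilityTheory.IndepFun.ae_ne [IsFiniteMeasure P] {X Y : Ω → ℝ} (hX : Measurable X)
    (hY : Measurable Y) (hXY : IndepFun X Y P) [NullSingletonClass (P.map Y)] :
    ∀ᵐ ω ∂P, X ω ≠ Y ω := by
  have hslice (x : ℝ) : Prod.mk x ⁻¹' Set.diagonal ℝ = {x} := by ext; simp [eq_comm]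
  rw [ae_iff]
  simp only [not_not]
  change P ((fun ω => (X ω, Y ω)) ⁻¹' Set.diagonal ℝ) = 0
  rw [← Measure.map_apply (hX.prodMk hY) measurableSet_diagonal,
    (indepFun_iff_map_prod_eq_prod_map_map hX.aemeasurable hY.aemeasurable).1 hXY,
    Measure.prod_apply measurableSet_diagonal]
  simp [hslice]

lemma ProbabilityTheory.iIndepFun.ae_injective {ι : Type*} [Countable ι] [IsFiniteMeasure P]
    {X : ι → Ω → ℝ} (hX : ∀ i, Measurable (X i)) (hindep : iIndepFun X P)
    (hatoms : ∀ i, NullSingletonClass (P.map (X i))) :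
    ∀ᵐ ω ∂P, Function.Injective fun i => X i ω := by
  have hne : ∀ᵐ ω ∂P, ∀ i j, i ≠ j → X i ω ≠ X j ω := by
    simp_rw [ae_all_iff]
    intro i j hij
    have := hatoms j
    exact (hindep.indepFun hij).ae_ne (hX i) (hX j)
  filter_upwards [hne] with ω hω i j hij
  by_contra h
  exact hω i j h hij

lemma ae_nonneg_of_map_eq_expMeasure {X : Ω → ℝ} (hX : Measurable X) {μ : ℝ}
    (hlaw : P.map X = expMeasure μ) : ∀ᵐ ω ∂P, 0 ≤ X ω := by
  have : ∀ᵐ x ∂P.map X, 0 ≤ x := by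
    rw [hlaw, ae_iff]
    simp only [not_le]
    exact expMeasure_Iio_zero
  exact ae_of_ae_map hX.aemeasurable this

lemma lintegral_setLIntegral_Ioo_of_indepFun [IsProbabilityMeasure P] {β : Type*}
    [MeasurableSpace β] {μ : ℝ} (hμ : 0 < μ) {X : Ω → ℝ} {Y : Ω → β}
    (hX : Measurable X) (hY : Measurable Y) (hXY : IndepFun X Y P)
    (hlaw : P.map X = expMeasure μ) {g : ℝ → β → ℝ≥0∞} (hg : Measurable (Function.uncurry g)) :
    ∫⁻ ω, (∫⁻ t in Set.Ioo 0 (X ω), g t (Y ω)) ∂P =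
      ENNReal.ofReal μ⁻¹ * ∫⁻ ω, g (X ω) (Y ω) ∂P := by
  have iterate {F : ℝ × β → ℝ≥0∞} (hF : Measurable F) :
      ∫⁻ ω, F (X ω, Y ω) ∂P = ∫⁻ y, ∫⁻ x, F (x, y) ∂expMeasure μ ∂P.map Y := by
    rw [← lintegral_map hF (hX.prodMk hY), ← hlaw,
      (indepFun_iff_map_prod_eq_prod_map_map hX.aemeasurable hY.aemeasurable).1 hXY,
      lintegral_prod_symm' _ hF]
  rw [iterate (measurable_setLIntegral_Ioo hg),
    show ∫⁻ ω, g (X ω) (Y ω) ∂P = _ from iterate hg,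
    ← lintegral_const_mul' _ _ ENNReal.ofReal_ne_top]
  exact lintegral_congr fun y =>
    lintegral_setLIntegral_Ioo_expMeasure hμ (hg.comp (measurable_id.prodMk measurable_const))

theorem lintegral_sum_min_kthOrderStat_of_iIndepFun_expMeasure [IsProbabilityMeasure P]
    {n k : ℕ} (hk1 : 1 ≤ k) (hkn : k ≤ n) {μ : ℝ} (hμ : 0 < μ) {E : Fin n → Ω → ℝ}
    (hE : ∀ i, Measurable (E i)) (hindep : iIndepFun E P)
    (hlaw : ∀ i, P.map (E i) = expMeasure μ) :
    ∫⁻ ω, ∑ i, ENNReal.ofReal (min (E i ω) (kthOrderStat k fun j => E j ω)) ∂P =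
      ENNReal.ofReal (k / μ) := by
  classical
  set Y := fun i ω (j : ↥({i}ᶜ : Finset (Fin n))) => E j ω
  have hY (i : Fin n) : Measurable (Y i) := measurable_pi_lambda _ fun j => hE j
  have hEY (i : Fin n) : IndepFun (E i) (Y i) P :=
    (hindep.indepFun_finset {i} {i}ᶜ disjoint_compl_right hE).comp
      (measurable_pi_apply (⟨i, mem_singleton_self i⟩ : ↥({i} : Finset (Fin n)))) measurable_id
  have hinj := hindep.ae_injective hE fun i => by rw [hlaw i]; infer_instance
  have hmin (i : Fin n) :
      Measurable fun ω => ENNReal.ofReal (min (E i ω) (kthOrderStat k fun j => E j ω)) :=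
    ((hE i).min (measurable_kthOrderStat hk1 hkn hE)).ennreal_ofReal
  have hfewer (i : Fin n) : Measurable fun ω => fewerThanAtMost k (Y i ω) (E i ω) :=
    (measurable_fewerThanAtMost k).comp ((hE i).prodMk (hY i))
  calc ∫⁻ ω, ∑ i, ENNReal.ofReal (min (E i ω) (kthOrderStat k fun j => E j ω)) ∂P
      = ∑ i, ∫⁻ ω, (∫⁻ t in Set.Ioo 0 (E i ω), fewerThanAtMost k (Y i ω) t) ∂P := by
        rw [lintegral_finsetSum _ fun i _ => hmin i]
        exact sum_congr rfl fun i _ => lintegral_congr fun ω =>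
          ofReal_min_kthOrderStat_eq_setLIntegral hk1 hkn (fun j => E j ω) i
    _ = ∑ i, ENNReal.ofReal μ⁻¹ * ∫⁻ ω, fewerThanAtMost k (Y i ω) (E i ω) ∂P :=
        sum_congr rfl fun i _ => lintegral_setLIntegral_Ioo_of_indepFun hμ (hE i) (hY i) (hEY i)
          (hlaw i) (measurable_fewerThanAtMost k)
    _ = ENNReal.ofReal μ⁻¹ * ∫⁻ ω, (k : ℝ≥0∞) ∂P := by
        rw [← mul_sum, ← lintegral_finsetSum _ fun i _ => hfewer i]
        congr 1
        refine lintegral_congr_ae (hinj.mono fun ω hω => ?_)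
        exact sum_fewerThanAtMost_compl_singleton (by simpa using hkn) hω
    _ = ENNReal.ofReal (k / μ) := by
        rw [lintegral_const, measure_univ, mul_one, ← ENNReal.ofReal_natCast,
          ← ENNReal.ofReal_mul (inv_nonneg.2 hμ.le), inv_mul_eq_div]

theorem integral_sum_min_kthOrderStat_of_iIndepFun_expMeasure [IsProbabilityMeasure P]
    {n k : ℕ} (hk1 : 1 ≤ k) (hkn : k ≤ n) {μ : ℝ} (hμ : 0 < μ) {E : Fin n → Ω → ℝ}
    (hE : ∀ i, Measurable (E i)) (hindep : iIndepFun E P)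
    (hlaw : ∀ i, P.map (E i) = expMeasure μ) :
    Integrable (fun ω => ∑ i, min (E i ω) (kthOrderStat k fun j => E j ω)) P ∧
      ∫ ω, ∑ i, min (E i ω) (kthOrderStat k fun j => E j ω) ∂P = k / μ := by
  have hmin_nonneg : ∀ᵐ ω ∂P, ∀ i, 0 ≤ min (E i ω) (kthOrderStat k fun j => E j ω) := by
    filter_upwards [ae_all_iff.2 fun i => ae_nonneg_of_map_eq_expMeasure (hE i) (hlaw i)]
      with ω hω i using le_min (hω i) (kthOrderStat_nonneg hk1 hkn hω)
  have hsum_nonneg : 0 ≤ᵐ[P] fun ω => ∑ i, min (E i ω) (kthOrderStat k fun j => E j ω) :=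
    hmin_nonneg.mono fun ω hω => sum_nonneg fun i _ => hω i
  have hlintegral : ∫⁻ ω, ENNReal.ofReal (∑ i, min (E i ω) (kthOrderStat k fun j => E j ω)) ∂P =
      ENNReal.ofReal (k / μ) := by
    rw [← lintegral_sum_min_kthOrderStat_of_iIndepFun_expMeasure hk1 hkn hμ hE hindep hlaw]
    exact lintegral_congr_ae <|
      hmin_nonneg.mono fun ω hω => ENNReal.ofReal_sum_of_nonneg fun i _ => hω i
  have hmeas : Measurable fun ω => ∑ i, min (E i ω) (kthOrderStat k fun j => E j ω) :=
    Finset.measurable_sum _ fun i _ => (hE i).min (measurable_kthOrderStat hk1 hkn hE)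
  refine ⟨⟨hmeas.aestronglyMeasurable, (hasFiniteIntegral_iff_ofReal hsum_nonneg).2 ?_⟩, ?_⟩
  · rw [hlintegral]
    exact ENNReal.ofReal_lt_top
  · rw [integral_eq_lintegral_of_nonneg_ae hsum_nonneg hmeas.aestronglyMeasurable, hlintegral,
      ENNReal.toReal_ofReal (div_nonneg (Nat.cast_nonneg k) hμ.le)]

end Independence

theorem expected_system_usage_shifted_exponential_general
    {Ω : Type*} [MeasurableSpace Ω] (P : Measure Ω) [IsProbabilityMeasure P]
    (n k : ℕ) (hk1 : 1 ≤ k) (hkn : k ≤ n)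
    (Δ μ : ℝ) (hμ : 0 < μ)
    (X : Fin n → Ω → ℝ) (hmeas : ∀ i, Measurable (X i))
    (hindep : iIndepFun X P)
    (hlaw : ∀ i, Measure.map (X i) P = Measure.map (fun x => Δ + x) (expMeasure μ)) :
    ∫ ω, ∑ i : Fin n, min (X i ω) (kthOrderStat k (fun j => X j ω)) ∂P =
      (n : ℝ) * Δ + (k : ℝ) / μ := by
  set E : Fin n → Ω → ℝ := fun i ω => X i ω - Δ
  have hE (i : Fin n) : Measurable (E i) := (hmeas i).sub_const Δ
  have hE_law (i : Fin n) : P.map (E i) = expMeasure μ := by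
    rw [show E i = (fun x => x - Δ) ∘ X i from rfl,
      ← Measure.map_map (measurable_sub_const Δ) (hmeas i), hlaw i,
      Measure.map_map (measurable_sub_const Δ) (measurable_const_add Δ)]
    simp [Function.comp_def]
  obtain ⟨hE_int, hE_integral⟩ := integral_sum_min_kthOrderStat_of_iIndepFun_expMeasure hk1 hkn hμ
    hE (hindep.comp (fun _ x => x - Δ) fun _ => measurable_sub_const Δ) hE_law
  have hshift (ω : Ω) : ∑ i, min (X i ω) (kthOrderStat k fun j => X j ω) =
      n * Δ + ∑ i, min (E i ω) (kthOrderStat k fun j => E j ω) := by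
    have hX (j : Fin n) : X j ω = Δ + E j ω := by simp [E]
    simp only [hX, kthOrderStat_const_add hk1 hkn, min_add_add_left, sum_add_distrib, sum_const,
      card_univ, Fintype.card_fin, nsmul_eq_mul]
  rw [integral_congr_ae (ae_of_all _ hshift), integral_add (integrable_const _) hE_int,
    hE_integral, integral_const]
  simp

/-- For i.i.d. shifted-exponential task delays, the expected system usage
`U = ∑_i min(X_i, X_(k))` (all tasks starting together, cancellation at the
`k`-th completion) equals `nΔ + k/μ`. -/
theorem expected_system_usage_shifted_exponential
    {Ω : Type*} [MeasurableSpace Ω] (P : Measure Ω) [IsProbabilityMeasure P]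
    (n k : ℕ) (hk1 : 1 ≤ k) (hkn : k ≤ n)
    (Δ μ : ℝ) (hΔ : 0 ≤ Δ) (hμ : 0 < μ)
    (X : Fin n → Ω → ℝ) (hmeas : ∀ i, Measurable (X i))
    (hindep : iIndepFun X P)
    (hlaw : ∀ i, Measure.map (X i) P = Measure.map (fun x => Δ + x) (expMeasure μ)) :
    ∫ ω, ∑ i : Fin n, min (X i ω) (kthOrderStat k (fun j => X j ω)) ∂P =
      (n : ℝ) * Δ + (k : ℝ) / μ :=
  expected_system_usage_shifted_exponential_general P n k hk1 hkn Δ μ hμ X hmeas hindep hlaw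
end

section
/- Fix positive constants Δ^f, Δ^e, Δ^l, Δ^g and J > 0. The function g(r) = J·r(r−1)/(Δ^f r + Δ^e) · (Δ^l + Δ^g ln(r/(r−1))) is strictly increasing in r on (1, ∞), tends to 0 as r → 1⁺, and tends to ∞ as r → ∞. -/
/-!
Write the function as `A r * B r` with `A r = J r / (Δᶠ r + Δᵉ)` and
`B r = Δˡ (r - 1) + Δᵍ (r - 1) log (r / (r - 1))`. The factor `A` is positive and nondecreasing.
The factor `B` is strictly increasing because `(r - 1) log (r / (r - 1))` has derivative
`log (r / (r - 1)) - 1 / r`, which is positive by `log x > 1 - 1 / x` at `x = r / (r - 1)`.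
As `r → 1⁺`, `B r → 0` by continuity of `x log x` at `0`; as `r → ∞`, `B r ≥ Δˡ (r - 1) → ∞`.
-/

open Set Filter Topology Real

theorem MonotoneOn.mul_strictMonoOn {M₀ α : Type*} [Mul M₀] [Zero M₀] [Preorder M₀] [Preorder α]
    [PosMulStrictMono M₀] [MulPosMono M₀] {f g : α → M₀} {s : Set α}
    (hf : MonotoneOn f s) (hg : StrictMonoOn g s) (hf₀ : ∀ x ∈ s, 0 < f x)
    (hg₀ : ∀ x ∈ s, 0 ≤ g x) : StrictMonoOn (f * g) s :=
  fun _ hx _ hy h ↦ mul_lt_mul' (hf hx hy h.le) (hg hx hy h) (hg₀ _ hx) (hf₀ _ hy)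

theorem Real.one_sub_inv_lt_log {x : ℝ} (hx : 0 < x) (hx₁ : x ≠ 1) : 1 - x⁻¹ < log x := by
  have := log_lt_sub_one_of_pos (inv_pos.2 hx) (inv_ne_one.2 hx₁)
  rw [log_inv] at this
  linarith

theorem inv_lt_log_div_sub_one {r : ℝ} (hr : 1 < r) : r⁻¹ < log (r / (r - 1)) := by
  have hr₀ : 0 < r - 1 := sub_pos.2 hr
  convert one_sub_inv_lt_log (div_pos (by positivity) hr₀) ?_ using 1
  · field_simp
    ring
  · rw [ne_eq, div_eq_one_iff_eq hr₀.ne']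
    linarith

theorem hasDerivAt_sub_one_mul_log_div_sub_one {r : ℝ} (hr : 1 < r) :
    HasDerivAt (fun r ↦ (r - 1) * log (r / (r - 1))) (log (r / (r - 1)) - r⁻¹) r := by
  have hr₀ : r - 1 ≠ 0 := (sub_pos.2 hr).ne'
  have hsub := (hasDerivAt_id r).sub_const 1
  have hlog := ((hasDerivAt_id r).div hsub hr₀).log (div_ne_zero (by positivity) hr₀)
  refine (hsub.mul hlog).congr_deriv ?_
  simp only [id, Pi.div_apply]
  field_simp
  ring

theorem strictMonoOn_sub_one_mul_log_div_sub_one :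
    StrictMonoOn (fun r : ℝ ↦ (r - 1) * log (r / (r - 1))) (Ioi 1) := by
  refine strictMonoOn_of_deriv_pos (convex_Ioi 1)
    (HasDerivAt.continuousOn fun r hr ↦ hasDerivAt_sub_one_mul_log_div_sub_one hr) ?_
  intro r hr
  rw [interior_Ioi] at hr
  rw [(hasDerivAt_sub_one_mul_log_div_sub_one hr).deriv, sub_pos]
  exact inv_lt_log_div_sub_one hr

theorem sub_one_mul_log_div_sub_one_pos {r : ℝ} (hr : 1 < r) :
    0 < (r - 1) * log (r / (r - 1)) :=
  mul_pos (sub_pos.2 hr) ((inv_pos.2 (zero_lt_one.trans hr)).trans (inv_lt_log_div_sub_one hr))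

theorem tendsto_sub_one_mul_log_div_sub_one_nhdsGT_one :
    Tendsto (fun r : ℝ ↦ (r - 1) * log (r / (r - 1))) (𝓝[>] 1) (𝓝 0) := by
  have hcont : ContinuousAt (fun r : ℝ ↦ (r - 1) * log r - (r - 1) * log (r - 1)) 1 :=
    ((continuousAt_id.sub continuousAt_const).mul (continuousAt_log one_ne_zero)).sub
      (continuous_mul_log.comp (continuous_sub_right 1)).continuousAt
  have hlim := hcont.continuousWithinAt (s := Ioi 1) |>.tendsto
  simp only [sub_self, zero_mul] at hlim
  refine hlim.congr' ?_
  filter_upwards [self_mem_nhdsWithin] with r (hr : 1 < r)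
  rw [log_div (by positivity) (sub_pos.2 hr).ne']
  ring

theorem monotoneOn_mul_div_mul_add {a b c : ℝ} (ha : 0 ≤ a) (hb : 0 < b) (hc : 0 ≤ c) :
    MonotoneOn (fun r ↦ c * r / (a * r + b)) (Ici 0) := by
  intro x (hx : 0 ≤ x) y (hy : 0 ≤ y) hxy
  rw [div_le_div_iff₀ (by positivity) (by positivity)]
  nlinarith [mul_le_mul_of_nonneg_left hxy (mul_nonneg hc hb.le)]

section

variable {a b : ℝ}

theorem strictMonoOn_mul_sub_one_add_mul_log (ha : 0 < a) (hb : 0 ≤ b) :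
    StrictMonoOn (fun r ↦ a * (r - 1) + b * ((r - 1) * log (r / (r - 1)))) (Ioi 1) :=
  StrictMonoOn.add_monotone (fun _ _ _ _ h ↦ by gcongr)
    fun _ hx _ hy h ↦ mul_le_mul_of_nonneg_left
      (strictMonoOn_sub_one_mul_log_div_sub_one.monotoneOn hx hy h) hb

theorem tendsto_mul_sub_one_add_mul_log_nhdsGT_one :
    Tendsto (fun r ↦ a * (r - 1) + b * ((r - 1) * log (r / (r - 1)))) (𝓝[>] 1) (𝓝 0) := by
  have hsub : Tendsto (fun r : ℝ ↦ r - 1) (𝓝[>] 1) (𝓝 0) :=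
    tendsto_nhdsWithin_of_tendsto_nhds (by simpa using (continuous_sub_right (1 : ℝ)).tendsto 1)
  simpa using (hsub.const_mul a).add (tendsto_sub_one_mul_log_div_sub_one_nhdsGT_one.const_mul b)

theorem tendsto_mul_sub_one_add_mul_log_atTop (ha : 0 < a) (hb : 0 ≤ b) :
    Tendsto (fun r ↦ a * (r - 1) + b * ((r - 1) * log (r / (r - 1)))) atTop atTop := by
  refine tendsto_atTop_add_right_of_le' _ 0
    ((tendsto_atTop_add_const_right _ (-1) tendsto_id).const_mul_atTop ha) ?_
  filter_upwards [eventually_gt_atTop 1] with r hr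
  exact mul_nonneg hb (sub_one_mul_log_div_sub_one_pos hr).le

end

/-- The right-hand side `r ↦ J·r(r−1)/(Δᶠr + Δᵉ)·(Δˡ + Δᵍ ln(r/(r−1)))` of the
optimality condition is strictly increasing on `(1, ∞)`, tends to `0` as
`r → 1⁺` and to `∞` as `r → ∞`. -/
theorem rhs_strict_mono_and_limits (Δf Δe Δl Δg J : ℝ)
    (hf : 0 < Δf) (he : 0 < Δe) (hl : 0 < Δl) (hg : 0 < Δg) (hJ : 0 < J) :
    StrictMonoOn
      (fun r : ℝ => J * (r * (r - 1)) / (Δf * r + Δe)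
        * (Δl + Δg * Real.log (r / (r - 1)))) (Ioi 1) ∧
    Tendsto
      (fun r : ℝ => J * (r * (r - 1)) / (Δf * r + Δe)
        * (Δl + Δg * Real.log (r / (r - 1)))) (nhdsWithin 1 (Ioi 1)) (nhds 0) ∧
    Tendsto
      (fun r : ℝ => J * (r * (r - 1)) / (Δf * r + Δe)
        * (Δl + Δg * Real.log (r / (r - 1)))) atTop atTop := by
  set A : ℝ → ℝ := fun r ↦ J * r / (Δf * r + Δe)
  set B : ℝ → ℝ := fun r ↦ Δl * (r - 1) + Δg * ((r - 1) * log (r / (r - 1)))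
  have hsplit : (fun r : ℝ => J * (r * (r - 1)) / (Δf * r + Δe)
      * (Δl + Δg * Real.log (r / (r - 1)))) = A * B := by
    funext r
    simp only [A, B, Pi.mul_apply]
    ring
  have hA : MonotoneOn A (Ici 0) := monotoneOn_mul_div_mul_add hf.le he hJ.le
  have hA₀ : ∀ r ∈ Ioi (1 : ℝ), 0 < A r := fun r (hr : 1 < r) ↦ by
    have : 0 < r := by linarith
    positivity
  have hB₀ : ∀ r ∈ Ioi (1 : ℝ), 0 ≤ B r := fun r (hr : 1 < r) ↦
    add_nonneg (mul_nonneg hl.le (sub_pos.2 hr).le)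
      (mul_nonneg hg.le (sub_one_mul_log_div_sub_one_pos hr).le)
  rw [hsplit]
  refine ⟨?_, ?_, ?_⟩
  · exact (hA.mono (Ioi_subset_Ici zero_le_one)).mul_strictMonoOn
      (strictMonoOn_mul_sub_one_add_mul_log hl hg.le) hA₀ hB₀
  · have hAc : ContinuousAt A 1 := by fun_prop (disch := positivity)
    rw [← mul_zero (A 1)]
    exact hAc.continuousWithinAt.tendsto.mul tendsto_mul_sub_one_add_mul_log_nhdsGT_one
  · refine tendsto_atTop_mono' _ ?_
      ((tendsto_mul_sub_one_add_mul_log_atTop hl hg.le).const_mul_atTop (hA₀ 2 (by norm_num)))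
    filter_upwards [eventually_ge_atTop 2] with r (hr : (2 : ℝ) ≤ r)
    exact mul_le_mul_of_nonneg_right (hA (by norm_num) (zero_le_two.trans hr) hr)
      (hB₀ r (one_lt_two.trans_le hr))
end
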